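/- Let φ be an LTLf formula over X ∪ Y and ψ = t(φ) ∧ alive ∧ (alive U G¬alive) its translated LTL formula over X ∪ Y ∪ {alive}, where alive is a fresh atom assigned to the agent. Then φ is α-stable realizable with respect to ⟨X, Y⟩ if and only if the LTL formula FGα → ψ is realizable with respect to ⟨X, Y ∪ {alive}⟩. -/
import Mathlib


namespace LTLfSynth

/-! ### Syntax of LTL / LTLf formulas -/

/-- Syntax of LTL / LTLf formulas over atomic propositions `P`
(with the standard abbreviation `true` included as a constant). -/
inductive Formula (P : Type) : Type
  | tt : Formula P
  | atom : P → Formula P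
  | not : Formula P → Formula P
  | and : Formula P → Formula P → Formula P
  | next : Formula P → Formula P
  | until_ : Formula P → Formula P → Formula P

namespace Formula

/-- LTLf satisfaction at position `i` of a finite trace `ρ` (a list of subsets of `P`). -/
def finSatAt {P : Type} (ρ : List (Set P)) : Formula P → ℕ → Prop
  | tt, _ => True
  | atom a, i => a ∈ ρ.getD i ∅
  | not φ, i => ¬ finSatAt ρ φ i
  | and φ ψ, i => finSatAt ρ φ i ∧ finSatAt ρ ψ i
  | next φ, i => i + 1 < ρ.length ∧ finSatAt ρ φ (i + 1)
  | until_ φ ψ, i => ∃ j, i ≤ j ∧ j < ρ.length ∧ finSatAt ρ ψ j ∧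
      ∀ k, i ≤ k → k < j → finSatAt ρ φ k

/-- `ρ ⊨ φ` for a finite trace. -/
def finSat {P : Type} (ρ : List (Set P)) (φ : Formula P) : Prop := finSatAt ρ φ 0

/-- LTL satisfaction at position `i` of an infinite trace `ρ : ℕ → Set P`. -/
def infSatAt {P : Type} (ρ : ℕ → Set P) : Formula P → ℕ → Prop
  | tt, _ => True
  | atom a, i => a ∈ ρ i
  | not φ, i => ¬ infSatAt ρ φ i
  | and φ ψ, i => infSatAt ρ φ i ∧ infSatAt ρ ψ i
  | next φ, i => infSatAt ρ φ (i + 1)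
  | until_ φ ψ, i => ∃ j, i ≤ j ∧ infSatAt ρ ψ j ∧
      ∀ k, i ≤ k → k < j → infSatAt ρ φ k

/-- `ρ ⊨ φ` for an infinite trace. -/
def infSat {P : Type} (ρ : ℕ → Set P) (φ : Formula P) : Prop := infSatAt ρ φ 0

/-- `F φ = true U φ`. -/
def F {P : Type} (φ : Formula P) : Formula P := until_ tt φ

/-- `G φ = ¬ F ¬ φ`. -/
def G {P : Type} (φ : Formula P) : Formula P := not (F (not φ))

/-- `φ ∨ ψ`. -/
def or {P : Type} (φ ψ : Formula P) : Formula P := not (and (not φ) (not ψ))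

/-- `φ → ψ`. -/
def imp {P : Type} (φ ψ : Formula P) : Formula P := or (not φ) ψ

/-- Atom renaming. -/
def map {P Q : Type} (f : P → Q) : Formula P → Formula Q
  | tt => tt
  | atom a => atom (f a)
  | not φ => not (map f φ)
  | and φ ψ => and (map f φ) (map f ψ)
  | next φ => next (map f φ)
  | until_ φ ψ => until_ (map f φ) (map f ψ)

end Formula

/-! ### The LTLf-to-LTL translation with the fresh atom `alive` (modeled as `none`) -/

/-- The fresh atom `alive` over `P ∪ {alive}`, modeled as `Option P` with `alive = none`. -/
def alive {P : Type} : Formula (Option P) := Formula.atom none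

/-- The translation `t` from LTLf over `P` to LTL over `P ∪ {alive}`. -/
def t {P : Type} : Formula P → Formula (Option P)
  | .tt => .tt
  | .atom a => .atom (some a)
  | .not φ => .not (t φ)
  | .and φ ψ => .and (t φ) (t ψ)
  | .next φ => .next (.and alive (t φ))
  | .until_ φ ψ => .until_ (t φ) (.and alive (t ψ))

/-- `ψ = t(φ) ∧ alive ∧ (alive U G ¬alive)`. -/
def transLTL {P : Type} (φ : Formula P) : Formula (Option P) :=
  .and (t φ) (.and alive (.until_ alive (Formula.G (.not alive))))

/-- Extension equivalence `τ ≈ τ'`: `τ'(i) = τ[i] ∪ {alive}` for `i < |τ|` and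
`τ'(i) = ∅` for `i ≥ |τ|`. -/
def extEquiv {P : Type} (τ : List (Set P)) (τ' : ℕ → Set (Option P)) : Prop :=
  (∀ i, i < τ.length → τ' i = insert none (Option.some '' τ.getD i ∅)) ∧
  (∀ i, τ.length ≤ i → τ' i = ∅)

/-! ### Boolean formulas (environment constraints) -/

/-- Boolean (propositional) formulas over variables `V`. -/
inductive BForm (V : Type) : Type
  | tt : BForm V
  | atom : V → BForm V
  | not : BForm V → BForm V
  | and : BForm V → BForm V → BForm V

namespace BForm

/-- `X ⊨ α` for an assignment `X ⊆ V`. -/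
def eval {V : Type} (X : Set V) : BForm V → Prop
  | tt => True
  | atom v => v ∈ X
  | not b => ¬ eval X b
  | and b c => eval X b ∧ eval X c

/-- View a Boolean formula as a temporal formula, relocating the atoms by `emb`. -/
def toFormula {V P : Type} (emb : V → P) : BForm V → Formula P
  | tt => .tt
  | atom v => .atom (emb v)
  | not b => .not (toFormula emb b)
  | and b c => .and (toFormula emb b) (toFormula emb c)

end BForm

/-! ### Traces, strategies and plays over a DFA arena -/

/-- Combine an environment assignment `X ⊆ Vx` with an agent assignment `Y ⊆ Vy` into
an assignment over `X ∪ Y` (modeled as `Vx ⊕ Vy`). -/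
def combine {Vx Vy : Type} (X : Set Vx) (Y : Set Vy) : Set (Vx ⊕ Vy) :=
  {v | Sum.elim (· ∈ X) (· ∈ Y) v}

/-- The history `[a₀, …, a_{j-1}]` of a sequence. -/
def histList {A : Type} (lam : ℕ → A) (j : ℕ) : List A :=
  (List.range j).map lam

/-- A sequence of environment assignments is `α`-fair if `α` holds infinitely often. -/
def fairSeq {Vx : Type} (α : BForm Vx) (lam : ℕ → Set Vx) : Prop :=
  ∀ n, ∃ j, n ≤ j ∧ α.eval (lam j)

/-- A sequence of environment assignments is `α`-stable if `α` holds at all but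
finitely many positions. -/
def stableSeq {Vx : Type} (α : BForm Vx) (lam : ℕ → Set Vx) : Prop :=
  ∃ n, ∀ j, n ≤ j → α.eval (lam j)

/-- The state visited at round `j` of the play from `s` induced by environment sequence
`lam` and agent strategy `g`. -/
def playState {Vx Vy S : Type} (δ : S → Set (Vx ⊕ Vy) → S) (g : List (Set Vx) → Set Vy)
    (s : S) (lam : ℕ → Set Vx) : ℕ → S
  | 0 => s
  | j + 1 => δ (playState δ g s lam j) (combine (lam j) (g (histList lam (j + 1))))

/-- The state visited at round `j` of the play from `s` in which the environment follows
strategy `h` (so `X_j = h (Y₀, …, Y_{j-1})`) and the agent plays the sequence `mu`. -/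
def envPlayState {Vx Vy S : Type} (δ : S → Set (Vx ⊕ Vy) → S) (h : List (Set Vy) → Set Vx)
    (s : S) (mu : ℕ → Set Vy) : ℕ → S
  | 0 => s
  | j + 1 => δ (envPlayState δ h s mu j) (combine (h (histList mu j)) (mu j))

/-- `s` is an agent winning state of the fair DFA game `⟨G, α⟩`. -/
def agentWinsFairFrom {Vx Vy S : Type} (δ : S → Set (Vx ⊕ Vy) → S) (Acc : Set S)
    (α : BForm Vx) (s : S) : Prop :=
  ∃ g : List (Set Vx) → Set Vy, ∀ lam : ℕ → Set Vx,
    ¬ fairSeq α lam ∨ ∃ j, playState δ g s lam j ∈ Acc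

/-- `s` is an agent winning state of the stable DFA game `⟨G, α⟩`. -/
def agentWinsStableFrom {Vx Vy S : Type} (δ : S → Set (Vx ⊕ Vy) → S) (Acc : Set S)
    (α : BForm Vx) (s : S) : Prop :=
  ∃ g : List (Set Vx) → Set Vy, ∀ lam : ℕ → Set Vx,
    ¬ stableSeq α lam ∨ ∃ j, playState δ g s lam j ∈ Acc

/-- `s` is an environment winning state of the fair DFA game `⟨G, α⟩`. -/
def envWinsFairFrom {Vx Vy S : Type} (δ : S → Set (Vx ⊕ Vy) → S) (Acc : Set S)
    (α : BForm Vx) (s : S) : Prop :=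
  ∃ h : List (Set Vy) → Set Vx, ∀ mu : ℕ → Set Vy,
    fairSeq α (fun j => h (histList mu j)) ∧ ∀ j, envPlayState δ h s mu j ∉ Acc

/-- `s` is an environment winning state of the stable DFA game `⟨G, α⟩`. -/
def envWinsStableFrom {Vx Vy S : Type} (δ : S → Set (Vx ⊕ Vy) → S) (Acc : Set S)
    (α : BForm Vx) (s : S) : Prop :=
  ∃ h : List (Set Vy) → Set Vx, ∀ mu : ℕ → Set Vy,
    stableSeq α (fun j => h (histList mu j)) ∧ ∀ j, envPlayState δ h s mu j ∉ Acc

/-! ### The fixpoint computations -/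

section Fixpoints

variable {Vx Vy S : Type} (δ : S → Set (Vx ⊕ Vy) → S) (Acc : Set S) (α : BForm Vx)

/-- `{s | ∃X ∀Y, (X ⊨ α ∧ δ(s, X∪Y) ∈ A ∖ Acc) ∨ δ(s, X∪Y) ∈ B ∖ Acc}`. -/
def envStep (A B : Set S) : Set S :=
  {s | ∃ X : Set Vx, ∀ Y : Set Vy,
    (α.eval X ∧ δ s (combine X Y) ∈ A \ Acc) ∨ δ s (combine X Y) ∈ B \ Acc}

/-- `{s | ∀X ∃Y, (X ⊭ α ∨ δ(s, X∪Y) ∈ A ∪ Acc) ∧ δ(s, X∪Y) ∈ B ∪ Acc}`. -/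
def sysStep (A B : Set S) : Set S :=
  {s | ∀ X : Set Vx, ∃ Y : Set Vy,
    (¬ α.eval X ∨ δ s (combine X Y) ∈ A ∪ Acc) ∧ δ s (combine X Y) ∈ B ∪ Acc}

lemma envStep_mono {A₁ A₂ B₁ B₂ : Set S} (hA : A₁ ⊆ A₂) (hB : B₁ ⊆ B₂) :
    envStep δ Acc α A₁ B₁ ⊆ envStep δ Acc α A₂ B₂ := by
  rintro s ⟨X, hX⟩
  refine ⟨X, fun Y => ?_⟩
  rcases hX Y with ⟨h1, h2, h3⟩ | ⟨h2, h3⟩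
  · exact Or.inl ⟨h1, hA h2, h3⟩
  · exact Or.inr ⟨hB h2, h3⟩

lemma sysStep_mono {A₁ A₂ B₁ B₂ : Set S} (hA : A₁ ⊆ A₂) (hB : B₁ ⊆ B₂) :
    sysStep δ Acc α A₁ B₁ ⊆ sysStep δ Acc α A₂ B₂ := by
  intro s hs X
  obtain ⟨Y, h1, h2⟩ := hs X
  refine ⟨Y, ?_, ?_⟩
  · rcases h1 with h | h | h
    · exact Or.inl h
    · exact Or.inr (Or.inl (hA h))
    · exact Or.inr (Or.inr h)
  · rcases h2 with h | h
    · exact Or.inl (hB h)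
    · exact Or.inr h

/-- Inner fixpoint operator `Ẑ ↦ envStep Z Ẑ` (for `Env_f`). -/
def envFairInner (Z : Set S) : Set S →o Set S :=
  ⟨fun Zh => envStep δ Acc α Z Zh, fun _ _ h => envStep_mono δ Acc α subset_rfl h⟩

/-- Outer operator `Z ↦ μẐ. envStep Z Ẑ` (for `Env_f`). -/
def envFairOuter : Set S →o Set S :=
  ⟨fun Z => OrderHom.lfp (envFairInner δ Acc α Z),
   fun _ _ h => OrderHom.lfp.monotone fun _ => envStep_mono δ Acc α h subset_rfl⟩

/-- `Env_f = νZ. μẐ. {s | ∃X ∀Y, (X ⊨ α ∧ δ(s,X∪Y) ∈ Z∖Acc) ∨ δ(s,X∪Y) ∈ Ẑ∖Acc}`. -/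
def EnvFair : Set S := OrderHom.gfp (envFairOuter δ Acc α)

/-- Inner fixpoint operator `Ẑ ↦ sysStep Z Ẑ` (for `Sys_f`). -/
def sysFairInner (Z : Set S) : Set S →o Set S :=
  ⟨fun Zh => sysStep δ Acc α Z Zh, fun _ _ h => sysStep_mono δ Acc α subset_rfl h⟩

/-- Outer operator `Z ↦ νẐ. sysStep Z Ẑ` (for `Sys_f`). -/
def sysFairOuter : Set S →o Set S :=
  ⟨fun Z => OrderHom.gfp (sysFairInner δ Acc α Z),
   fun _ _ h => OrderHom.gfp.monotone fun _ => sysStep_mono δ Acc α h subset_rfl⟩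

/-- `Sys_f = μZ. νẐ. {s | ∀X ∃Y, (X ⊭ α ∨ δ(s,X∪Y) ∈ Z∪Acc) ∧ δ(s,X∪Y) ∈ Ẑ∪Acc}`. -/
def SysFair : Set S := OrderHom.lfp (sysFairOuter δ Acc α)

/-- Inner fixpoint operator `Ẑ ↦ envStep Ẑ Z` (for `Env_st`). -/
def envStInner (Z : Set S) : Set S →o Set S :=
  ⟨fun Zh => envStep δ Acc α Zh Z, fun _ _ h => envStep_mono δ Acc α h subset_rfl⟩

/-- Outer operator `Z ↦ νẐ. envStep Ẑ Z` (for `Env_st`). -/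
def envStOuter : Set S →o Set S :=
  ⟨fun Z => OrderHom.gfp (envStInner δ Acc α Z),
   fun _ _ h => OrderHom.gfp.monotone fun _ => envStep_mono δ Acc α subset_rfl h⟩

/-- `Env_st = μZ. νẐ. {s | ∃X ∀Y, (X ⊨ α ∧ δ(s,X∪Y) ∈ Ẑ∖Acc) ∨ δ(s,X∪Y) ∈ Z∖Acc}`. -/
def EnvSt : Set S := OrderHom.lfp (envStOuter δ Acc α)

/-- Inner fixpoint operator `Ẑ ↦ sysStep Ẑ Z` (for `Sys_st`). -/
def sysStInner (Z : Set S) : Set S →o Set S :=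
  ⟨fun Zh => sysStep δ Acc α Zh Z, fun _ _ h => sysStep_mono δ Acc α h subset_rfl⟩

/-- Outer operator `Z ↦ μẐ. sysStep Ẑ Z` (for `Sys_st`). -/
def sysStOuter : Set S →o Set S :=
  ⟨fun Z => OrderHom.lfp (sysStInner δ Acc α Z),
   fun _ _ h => OrderHom.lfp.monotone fun _ => sysStep_mono δ Acc α subset_rfl h⟩

/-- `Sys_st = νZ. μẐ. {s | ∀X ∃Y, (X ⊭ α ∨ δ(s,X∪Y) ∈ Ẑ∪Acc) ∧ δ(s,X∪Y) ∈ Z∪Acc}`. -/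
def SysSt : Set S := OrderHom.gfp (sysStOuter δ Acc α)

end Fixpoints

/-! ### Strategy extraction -/

/-- Approximates `Z₀ = ∅`,
`Z_{i+1} = {s | ∀X ∃Y, (X ⊭ α ∨ δ(s,X∪Y) ∈ Z_i ∪ Acc) ∧ δ(s,X∪Y) ∈ Sys_f ∪ Acc}`. -/
def fairApprox {Vx Vy S : Type} (δ : S → Set (Vx ⊕ Vy) → S) (Acc : Set S) (α : BForm Vx) :
    ℕ → Set S
  | 0 => ∅
  | i + 1 => sysStep δ Acc α (fairApprox δ Acc α i) (SysFair δ Acc α)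

/-- One step of the arena under output function `ω`: `δ(s, X ∪ ω(s, X))`. -/
def stepWith {Vx Vy S : Type} (δ : S → Set (Vx ⊕ Vy) → S) (ω : S → Set Vx → Set Vy)
    (s : S) (X : Set Vx) : S :=
  δ s (combine X (ω s X))

/-- The strategy generated by an output function `ω` from `s₀`:
`g(X₀,…,X_j) = ω(t_j, X_j)` where `t₀ = s₀` and `t_{k+1} = δ(t_k, X_k ∪ ω(t_k, X_k))`. -/
def genStrategy {Vx Vy S : Type} (δ : S → Set (Vx ⊕ Vy) → S) (ω : S → Set Vx → Set Vy)
    (s₀ : S) (l : List (Set Vx)) : Set Vy :=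
  ω (l.dropLast.foldl (stepWith δ ω) s₀) (l.getLast?.getD ∅)

/-- Admissibility of an output function for the fair game: for every `i`, every
non-accepting `s ∈ Z_{i+1} ∖ Z_i` and every `X`, the value `Y = ω(s, X)` satisfies
`(X ⊭ α ∨ δ(s,X∪Y) ∈ Z_i ∪ Acc) ∧ δ(s,X∪Y) ∈ Sys_f ∪ Acc`. -/
def AdmissibleFair {Vx Vy S : Type} (δ : S → Set (Vx ⊕ Vy) → S) (Acc : Set S)
    (α : BForm Vx) (ω : S → Set Vx → Set Vy) : Prop :=
  ∀ i : ℕ, ∀ s ∈ fairApprox δ Acc α (i + 1), s ∉ fairApprox δ Acc α i → s ∉ Acc →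
    ∀ X : Set Vx,
      (¬ α.eval X ∨ stepWith δ ω s X ∈ fairApprox δ Acc α i ∪ Acc) ∧
        stepWith δ ω s X ∈ SysFair δ Acc α ∪ Acc

/-- `W = νZ. {s | ∀X ∃Y, (X ⊭ α ∨ δ(s,X∪Y) ∈ Sys_st ∪ Acc) ∧ δ(s,X∪Y) ∈ Z ∪ Acc}`. -/
def Wst {Vx Vy S : Type} (δ : S → Set (Vx ⊕ Vy) → S) (Acc : Set S) (α : BForm Vx) : Set S :=
  OrderHom.gfp (sysFairInner δ Acc α (SysSt δ Acc α))

/-- Admissibility of an output function for the stable game: for every non-accepting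
`s ∈ W` and every `X`, the value `Y = ω(s, X)` satisfies
`(X ⊭ α ∨ δ(s,X∪Y) ∈ Sys_st ∪ Acc) ∧ δ(s,X∪Y) ∈ W ∪ Acc`. -/
def AdmissibleStable {Vx Vy S : Type} (δ : S → Set (Vx ⊕ Vy) → S) (Acc : Set S)
    (α : BForm Vx) (ω : S → Set Vx → Set Vy) : Prop :=
  ∀ s ∈ Wst δ Acc α, s ∉ Acc → ∀ X : Set Vx,
    (¬ α.eval X ∨ stepWith δ ω s X ∈ SysSt δ Acc α ∪ Acc) ∧
      stepWith δ ω s X ∈ Wst δ Acc α ∪ Acc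

/-! ### Realizability notions -/

/-- The infinite combined trace induced by environment sequence `lam` and agent
strategy `g`: position `i` carries `X_i ∪ g(X₀,…,X_i)`. -/
def inducedTrace {Vx Vy : Type} (g : List (Set Vx) → Set Vy) (lam : ℕ → Set Vx)
    (i : ℕ) : Set (Vx ⊕ Vy) :=
  combine (lam i) (g (histList lam (i + 1)))

/-- The finite trace `ρ^k = (X₀ ∪ g(X₀)), …, (X_k ∪ g(X₀,…,X_k))`. -/
def finPrefix {Vx Vy : Type} (g : List (Set Vx) → Set Vy) (lam : ℕ → Set Vx)
    (k : ℕ) : List (Set (Vx ⊕ Vy)) :=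
  (List.range (k + 1)).map (inducedTrace g lam)

/-- `φ` is `α`-fair realizable. -/
def fairRealizable {Vx Vy : Type} (α : BForm Vx) (φ : Formula (Vx ⊕ Vy)) : Prop :=
  ∃ g : List (Set Vx) → Set Vy, ∀ lam : ℕ → Set Vx,
    fairSeq α lam → ∃ k, Formula.finSat (finPrefix g lam k) φ

/-- `φ` is `α`-stable realizable. -/
def stableRealizable {Vx Vy : Type} (α : BForm Vx) (φ : Formula (Vx ⊕ Vy)) : Prop :=
  ∃ g : List (Set Vx) → Set Vy, ∀ lam : ℕ → Set Vx,
    stableSeq α lam → ∃ k, Formula.finSat (finPrefix g lam k) φ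

/-- `φ` is realizable under the LTL environment assumption `ψA`. -/
def realizableUnder {Vx Vy : Type} (ψA φ : Formula (Vx ⊕ Vy)) : Prop :=
  ∃ g : List (Set Vx) → Set Vy, ∀ lam : ℕ → Set Vx,
    Formula.infSat (inducedTrace g lam) ψA → ∃ k, Formula.finSat (finPrefix g lam k) φ

/-- Combine `X ⊆ Vx` with an agent assignment over `Y ∪ {alive}` (modeled as
`Option Vy`, with `alive = none`) into an assignment over `X ∪ Y ∪ {alive}`. -/
def combineA {Vx Vy : Type} (X : Set Vx) (Y' : Set (Option Vy)) :
    Set (Option (Vx ⊕ Vy)) :=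
  {v | match v with
       | none => none ∈ Y'
       | some (Sum.inl x) => x ∈ X
       | some (Sum.inr y) => some y ∈ Y'}

/-- LTL realizability of `ψ` over `X ∪ Y ∪ {alive}` w.r.t. `⟨X, Y ∪ {alive}⟩`,
where `alive` is controlled by the agent. -/
def ltlRealizable {Vx Vy : Type} (ψ : Formula (Option (Vx ⊕ Vy))) : Prop :=
  ∃ f : List (Set Vx) → Set (Option Vy), ∀ lam : ℕ → Set Vx,
    Formula.infSat (fun i => combineA (lam i) (f (histList lam (i + 1)))) ψ

end LTLfSynth

namespace LTLfSynth

open Formula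

lemma histList_length' {A : Type} (lam : ℕ → A) (m : ℕ) : (histList lam m).length = m := by
  simp [histList]

lemma histList_getD' {A : Type} (lam : ℕ → A) {m i : ℕ} (h : i < m) (d : A) :
    (histList lam m).getD i d = lam i := by
  simp [histList, List.getD, h]

lemma histList_congr' {A : Type} {lam lam' : ℕ → A} {m : ℕ}
    (h : ∀ i, i < m → lam i = lam' i) : histList lam m = histList lam' m := by
  unfold histList
  apply List.map_congr_left
  intro i hi
  exact h i (List.mem_range.mp hi)

lemma inducedTrace_congr' {Vx Vy : Type} (g : List (Set Vx) → Set Vy) {lam lam' : ℕ → Set Vx}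
    {i : ℕ} (h : ∀ j, j ≤ i → lam j = lam' j) :
    inducedTrace g lam i = inducedTrace g lam' i := by
  unfold inducedTrace
  rw [h i le_rfl, histList_congr' (fun j hj => h j (by omega))]

lemma finPrefix_congr' {Vx Vy : Type} (g : List (Set Vx) → Set Vy) {lam lam' : ℕ → Set Vx}
    {k : ℕ} (h : ∀ j, j ≤ k → lam j = lam' j) :
    finPrefix g lam k = finPrefix g lam' k := by
  unfold finPrefix
  apply List.map_congr_left
  intro i hi
  have hik : i ≤ k := by have := List.mem_range.mp hi; omega
  exact inducedTrace_congr' g (fun j hj => h j (by omega))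

lemma finPrefix_length' {Vx Vy : Type} (g : List (Set Vx) → Set Vy) (lam : ℕ → Set Vx)
    (k : ℕ) : (finPrefix g lam k).length = k + 1 := by
  simp [finPrefix]

lemma finPrefix_getD' {Vx Vy : Type} (g : List (Set Vx) → Set Vy) (lam : ℕ → Set Vx)
    {k i : ℕ} (h : i ≤ k) : (finPrefix g lam k).getD i ∅ = inducedTrace g lam i := by
  have hik : i < k + 1 := by omega
  simp [finPrefix, List.getD, hik]

lemma toFormula_infSatAt' {Vx Vy : Type} (b : BForm Vx) (τ : ℕ → Set (Option (Vx ⊕ Vy)))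
    (lam : ℕ → Set Vx) (hτ : ∀ i x, (some (Sum.inl x) ∈ τ i) ↔ x ∈ lam i) (i : ℕ) :
    infSatAt τ (b.toFormula (fun x => some (Sum.inl x))) i ↔ b.eval (lam i) := by
  induction b with
  | tt => simp [BForm.toFormula, infSatAt, BForm.eval]
  | atom v => simpa [BForm.toFormula, infSatAt, BForm.eval] using hτ i v
  | not b ih => simp [BForm.toFormula, infSatAt, BForm.eval, ih]
  | and b c ihb ihc => simp [BForm.toFormula, infSatAt, BForm.eval, ihb, ihc]

lemma infSat_FG_iff' {Vx Vy : Type} (α : BForm Vx) (τ : ℕ → Set (Option (Vx ⊕ Vy)))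
    (lam : ℕ → Set Vx) (hτ : ∀ i x, (some (Sum.inl x) ∈ τ i) ↔ x ∈ lam i) :
    infSat τ (F (G (α.toFormula (fun x => some (Sum.inl x))))) ↔ stableSeq α lam := by
  have h := toFormula_infSatAt' α τ lam hτ
  show infSatAt τ _ 0 ↔ _
  simp only [F, G, stableSeq]
  constructor
  · rintro ⟨j, -, hj, -⟩
    refine ⟨j, fun k hk => ?_⟩
    by_contra hc
    exact hj ⟨k, hk, fun hs => hc ((h k).mp hs), fun _ _ _ => trivial⟩
  · rintro ⟨m, hm⟩
    refine ⟨m, Nat.zero_le _, ?_, fun _ _ _ => trivial⟩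
    rintro ⟨k, hk, hks, -⟩
    exact hks ((h k).mpr (hm k hk))

lemma infSat_imp_iff' {P : Type} (τ : ℕ → Set P) (p q : Formula P) :
    infSat τ (Formula.imp p q) ↔ (infSat τ p → infSat τ q) := by
  show infSatAt τ _ 0 ↔ (infSatAt τ p 0 → infSatAt τ q 0)
  simp only [Formula.imp, Formula.or, infSatAt, not_not]
  tauto

lemma t_infSatAt_iff' {P : Type} (τ : ℕ → Set (Option P)) (n : ℕ) (ρ : List (Set P))
    (hlen : ρ.length = n + 1)
    (halive : ∀ i, (none ∈ τ i) ↔ i ≤ n)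
    (hatom : ∀ i (a : P), i ≤ n → ((some a ∈ τ i) ↔ a ∈ ρ.getD i ∅))
    (φ : Formula P) : ∀ i, i ≤ n → (infSatAt τ (t φ) i ↔ finSatAt ρ φ i) := by
  induction φ with
  | tt => intro i hi; simp [t, infSatAt, finSatAt]
  | atom a => intro i hi; simpa [t, infSatAt, finSatAt] using hatom i a hi
  | not φ ih => intro i hi; simp only [t, infSatAt, finSatAt, ih i hi]
  | and φ ψ ihφ ihψ => intro i hi; simp only [t, infSatAt, finSatAt, ihφ i hi, ihψ i hi]
  | next φ ih =>
    intro i hi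
    show (none ∈ τ (i + 1) ∧ infSatAt τ (t φ) (i + 1)) ↔
      (i + 1 < ρ.length ∧ finSatAt ρ φ (i + 1))
    rw [hlen]
    constructor
    · rintro ⟨ha, hφ⟩
      have hi1 : i + 1 ≤ n := (halive (i + 1)).mp ha
      exact ⟨by omega, (ih (i + 1) hi1).mp hφ⟩
    · rintro ⟨hlt, hφ⟩
      have hi1 : i + 1 ≤ n := by omega
      exact ⟨(halive (i + 1)).mpr hi1, (ih (i + 1) hi1).mpr hφ⟩
  | until_ φ ψ ihφ ihψ =>
    intro i hi
    show (∃ j, i ≤ j ∧ (none ∈ τ j ∧ infSatAt τ (t ψ) j) ∧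
        ∀ k, i ≤ k → k < j → infSatAt τ (t φ) k) ↔ _
    rw [finSatAt, hlen]
    constructor
    · rintro ⟨j, hij, ⟨ha, hψ⟩, hk⟩
      have hj : j ≤ n := (halive j).mp ha
      exact ⟨j, hij, by omega, (ihψ j hj).mp hψ,
        fun k h1 h2 => (ihφ k (by omega)).mp (hk k h1 h2)⟩
    · rintro ⟨j, hij, hjn, hψ, hk⟩
      have hj : j ≤ n := by omega
      exact ⟨j, hij, ⟨(halive j).mpr hj, (ihψ j hj).mpr hψ⟩,
        fun k h1 h2 => (ihφ k (by omega)).mpr (hk k h1 h2)⟩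

/-- The agent strategy for the LTL game: simulate `g` and keep `alive` on until the
first prefix satisfying `φ` has been produced. -/
def fwdStrategy {Vx Vy : Type} (φ : Formula (Vx ⊕ Vy)) (g : List (Set Vx) → Set Vy)
    (l : List (Set Vx)) : Set (Option Vy) :=
  (Option.some '' g l) ∪
    {v | v = none ∧ ¬ ∃ j, j + 1 < l.length ∧
        Formula.finSat (finPrefix g (fun i => l.getD i ∅) j) φ}

lemma mem_fwdStrategy_some {Vx Vy : Type} (φ : Formula (Vx ⊕ Vy))
    (g : List (Set Vx) → Set Vy) (l : List (Set Vx)) (y : Vy) :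
    some y ∈ fwdStrategy φ g l ↔ y ∈ g l := by
  simp [fwdStrategy]

lemma mem_fwdStrategy_none {Vx Vy : Type} (φ : Formula (Vx ⊕ Vy))
    (g : List (Set Vx) → Set Vy) (l : List (Set Vx)) :
    (none ∈ fwdStrategy φ g l) ↔ ¬ ∃ j, j + 1 < l.length ∧
        Formula.finSat (finPrefix g (fun i => l.getD i ∅) j) φ := by
  simp [fwdStrategy]

end LTLfSynth
open LTLfSynth in
/-- `φ` is `α`-stable realizable w.r.t. `⟨X, Y⟩` iff the LTL formula
`FGα → ψ` is realizable w.r.t. `⟨X, Y ∪ {alive}⟩`, where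
`ψ = t(φ) ∧ alive ∧ (alive U G ¬alive)`. -/
theorem stable_realizable_iff_ltl_realizable {Vx Vy : Type} [Fintype Vx] [Fintype Vy]
    (α : BForm Vx) (φ : Formula (Vx ⊕ Vy)) :
    stableRealizable α φ ↔
      ltlRealizable (Vx := Vx) (Vy := Vy)
        (Formula.imp (Formula.F (Formula.G (α.toFormula (fun x => some (Sum.inl x)))))
          (transLTL φ)) := by
  classical
  constructor
  · -- forward direction
    rintro ⟨g, hg⟩
    refine ⟨fwdStrategy φ g, fun lam => ?_⟩
    set τ : ℕ → Set (Option (Vx ⊕ Vy)) :=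
      fun i => combineA (lam i) (fwdStrategy φ g (histList lam (i + 1))) with hτdef
    have hA : ∀ i x, (some (Sum.inl x) ∈ τ i) ↔ x ∈ lam i := fun _ _ => Iff.rfl
    have hB : ∀ i y, (some (Sum.inr y) ∈ τ i) ↔ y ∈ g (histList lam (i + 1)) :=
      fun i y => mem_fwdStrategy_some φ g _ y
    have hC : ∀ i, (none ∈ τ i) ↔
        ¬ ∃ j, j < i ∧ Formula.finSat (finPrefix g lam j) φ := by
      intro i
      have hl : (histList lam (i + 1)).length = i + 1 := histList_length' _ _
      have heq : ∀ j, j < i →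
          finPrefix g (fun i' => (histList lam (i + 1)).getD i' ∅) j = finPrefix g lam j := by
        intro j hj
        exact finPrefix_congr' g (fun j' hj' => histList_getD' lam (by omega) ∅)
      rw [show (none ∈ τ i) ↔ _ from mem_fwdStrategy_none φ g (histList lam (i + 1)), hl]
      constructor
      · rintro h ⟨j, hj, hs⟩
        exact h ⟨j, by omega, (heq j hj) ▸ hs⟩
      · rintro h ⟨j, hj, hs⟩
        exact h ⟨j, by omega, (heq j (by omega)) ▸ hs⟩
    rw [infSat_imp_iff']
    intro hFG
    have hstable : stableSeq α lam := (infSat_FG_iff' α τ lam hA).mp hFG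
    have hex : ∃ k, Formula.finSat (finPrefix g lam k) φ := hg lam hstable
    set n := Nat.find hex with hndef
    have hn : Formula.finSat (finPrefix g lam n) φ := Nat.find_spec hex
    have hmin : ∀ j, j < n → ¬ Formula.finSat (finPrefix g lam j) φ :=
      fun j hj => Nat.find_min hex hj
    have halive : ∀ i, (none ∈ τ i) ↔ i ≤ n := by
      intro i
      rw [hC i]
      constructor
      · intro h
        by_contra hgt
        push_neg at hgt
        exact h ⟨n, by omega, hn⟩
      · rintro hin ⟨j, hj, hs⟩
        exact hmin j (by omega) hs
    have hatom : ∀ i (a : Vx ⊕ Vy), i ≤ n →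
        ((some a ∈ τ i) ↔ a ∈ (finPrefix g lam n).getD i ∅) := by
      intro i a hi
      rw [finPrefix_getD' g lam hi]
      cases a with
      | inl x => exact Iff.rfl
      | inr y => exact hB i y
    refine ⟨?_, ?_, ?_⟩
    · exact (t_infSatAt_iff' τ n (finPrefix g lam n) (finPrefix_length' g lam n)
        halive hatom φ 0 (Nat.zero_le n)).mpr hn
    · exact (halive 0).mpr (Nat.zero_le n)
    · refine ⟨n + 1, Nat.zero_le _, ?_, fun k _ hk => (halive k).mpr (by omega)⟩
      rintro ⟨k, hk1, hk2, -⟩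
      exact hk2 (fun h => absurd ((halive k).mp h) (by omega))
  · -- backward direction
    rintro ⟨f, hf⟩
    refine ⟨fun l => {y | some y ∈ f l}, fun lam hstable => ?_⟩
    set g : List (Set Vx) → Set Vy := fun l => {y | some y ∈ f l} with hgdef
    set τ : ℕ → Set (Option (Vx ⊕ Vy)) :=
      fun i => combineA (lam i) (f (histList lam (i + 1))) with hτdef
    have hA : ∀ i x, (some (Sum.inl x) ∈ τ i) ↔ x ∈ lam i := fun _ _ => Iff.rfl
    have hψ : Formula.infSat τ (transLTL φ) :=
      (infSat_imp_iff' τ _ _).mp (hf lam) ((infSat_FG_iff' α τ lam hA).mpr hstable)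
    obtain ⟨ht, hal0, j, -, hG, halk⟩ :
        Formula.infSatAt τ (t φ) 0 ∧ (none ∈ τ 0) ∧
          ∃ j, 0 ≤ j ∧ Formula.infSatAt τ (Formula.G (.not alive)) j ∧
            ∀ k, 0 ≤ k → k < j → none ∈ τ k := hψ
    have hGk : ∀ k, j ≤ k → none ∉ τ k := by
      intro k hk h
      exact hG ⟨k, hk, fun h' => h' h, fun _ _ _ => trivial⟩
    have hj1 : 1 ≤ j := by
      by_contra hc
      exact hGk 0 (by omega) hal0
    set n := j - 1 with hndef
    have halive : ∀ i, (none ∈ τ i) ↔ i ≤ n := by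
      intro i
      constructor
      · intro h
        by_contra hc
        exact hGk i (by omega) h
      · intro h
        exact halk i (Nat.zero_le _) (by omega)
    have hatom : ∀ i (a : Vx ⊕ Vy), i ≤ n →
        ((some a ∈ τ i) ↔ a ∈ (finPrefix g lam n).getD i ∅) := by
      intro i a hi
      rw [finPrefix_getD' g lam hi]
      cases a with
      | inl x => exact Iff.rfl
      | inr y => exact Iff.rfl
    exact ⟨n, (t_infSatAt_iff' τ n (finPrefix g lam n) (finPrefix_length' g lam n)
      halive hatom φ 0 (Nat.zero_le n)).mp ht⟩
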